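/- arXiv:1906.06757 — 2 statements merged into one kernel-verified Lean document; each statement's English description precedes it below -/
import Mathlib

section
/- Let g be a metric on the connected open set U and let V be a Killing vector field for g, i.e., a smooth vector field such that for every g-geodesic γ the function τ ↦ γ'(τ)ᵀ g(γ(τ)) V(γ(τ)) is constant. If V(p) = 0 and all first order partial derivatives of all components of V vanish at some point p ∈ U, then V is identically zero on U. -/
open Matrix

noncomputable section

/-- Partial derivative in the `i`-th coordinate direction of a real-valued function on `ℝⁿ`. -/
def pd {n : ℕ} (i : Fin n) (f : (Fin n → ℝ) → ℝ) : (Fin n → ℝ) → ℝ :=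
  fun x => fderiv ℝ f x (Pi.single i 1)

/-- Iterated partial derivatives along a list of coordinate directions. -/
def iterPD {n : ℕ} : List (Fin n) → ((Fin n → ℝ) → ℝ) → ((Fin n → ℝ) → ℝ)
  | [], f => f
  | i :: l, f => pd i (iterPD l f)

/-- `g` is a (pseudo-Riemannian) metric on `U`: a smooth field of invertible symmetric
real `n×n` matrices. -/
structure IsMetricOn {n : ℕ} (U : Set (Fin n → ℝ))
    (g : (Fin n → ℝ) → Matrix (Fin n) (Fin n) ℝ) : Prop where
  smooth : ∀ i j : Fin n, ContDiffOn ℝ (⊤ : ℕ∞) (fun x => g x i j) U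
  symm : ∀ x ∈ U, (g x).IsSymm
  nondeg : ∀ x ∈ U, IsUnit (g x).det

/-- The Christoffel symbols `Γ^k_{ij}` of the metric `g`. -/
def Gamma {n : ℕ} (g : (Fin n → ℝ) → Matrix (Fin n) (Fin n) ℝ)
    (k i j : Fin n) (x : Fin n → ℝ) : ℝ :=
  (1/2) * ∑ ℓ, (g x)⁻¹ k ℓ *
    (pd i (fun y => g y ℓ j) x + pd j (fun y => g y ℓ i) x - pd ℓ (fun y => g y i j) x)

/-- An open interval of `ℝ` (possibly empty or unbounded): an open order-connected set. -/
def IsOpenInterval (I : Set ℝ) : Prop := IsOpen I ∧ I.OrdConnected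

/-- `γ` is a `g`-geodesic defined on the open interval `I`, with values in `U`. -/
structure IsGeodesicOn {n : ℕ} (U : Set (Fin n → ℝ))
    (g : (Fin n → ℝ) → Matrix (Fin n) (Fin n) ℝ)
    (γ : ℝ → (Fin n → ℝ)) (I : Set ℝ) : Prop where
  interval : IsOpenInterval I
  smooth : ∀ k : Fin n, ContDiffOn ℝ (⊤ : ℕ∞) (fun s => γ s k) I
  mem : ∀ t ∈ I, γ t ∈ U
  eqn : ∀ t ∈ I, ∀ k : Fin n,
    deriv (deriv fun s => γ s k) t
      + ∑ i, ∑ j, Gamma g k i j (γ t) * deriv (fun s => γ s i) t * deriv (fun s => γ s j) t = 0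

/-- `g` and `gbar` are projectively equivalent on `U`: every `g`-geodesic with nowhere
vanishing velocity becomes, after a smooth reparameterization (a diffeomorphism of open
intervals), a `gbar`-geodesic. -/
def ProjEquiv {n : ℕ} (U : Set (Fin n → ℝ))
    (g gbar : (Fin n → ℝ) → Matrix (Fin n) (Fin n) ℝ) : Prop :=
  ∀ (γ : ℝ → (Fin n → ℝ)) (I : Set ℝ), IsGeodesicOn U g γ I →
    (∀ t ∈ I, ∃ k, deriv (fun s => γ s k) t ≠ 0) →
    ∃ (φ : ℝ → ℝ) (J : Set ℝ), IsOpenInterval J ∧ ContDiffOn ℝ (⊤ : ℕ∞) φ J ∧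
      Set.InjOn φ J ∧ φ '' J = I ∧ (∀ t ∈ J, deriv φ t ≠ 0) ∧
      IsGeodesicOn U gbar (γ ∘ φ) J

/-- The (1,1)-tensor `L = |det gbar / det g|^{1/(n+1)} gbar⁻¹ g` built from `g` and `gbar`. -/
def Lfield {n : ℕ} (g gbar : (Fin n → ℝ) → Matrix (Fin n) (Fin n) ℝ)
    (x : Fin n → ℝ) : Matrix (Fin n) (Fin n) ℝ :=
  |(gbar x).det / (g x).det| ^ ((1 : ℝ)/((n : ℝ)+1)) • ((gbar x)⁻¹ * g x)

/-- The family `S(t) = adjugate (t·Id − L)`. -/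
def Sfield {n : ℕ} (g gbar : (Fin n → ℝ) → Matrix (Fin n) (Fin n) ℝ) (t : ℝ)
    (x : Fin n → ℝ) : Matrix (Fin n) (Fin n) ℝ :=
  (t • (1 : Matrix (Fin n) (Fin n) ℝ) - Lfield g gbar x).adjugate

/-- The second order operator associated (via Carter's quantization) to a field `A` of
symmetric matrices: `Â f = |det g|^{-1/2} ∑ᵢⱼ ∂ᵢ(|det g|^{1/2} Aⁱʲ ∂ⱼ f)`. -/
def assocOp {n : ℕ} (g A : (Fin n → ℝ) → Matrix (Fin n) (Fin n) ℝ)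
    (f : (Fin n → ℝ) → ℝ) (x : Fin n → ℝ) : ℝ :=
  |(g x).det| ^ (-(1 : ℝ)/2) * ∑ i, ∑ j,
    pd i (fun y => |(g y).det| ^ ((1 : ℝ)/2) * A y i j * pd j f y) x

/-- The operator `K̂^{(t)}`, associated to `A = S(t)·g⁻¹`. -/
def Khat {n : ℕ} (g gbar : (Fin n → ℝ) → Matrix (Fin n) (Fin n) ℝ) (t : ℝ)
    (f : (Fin n → ℝ) → ℝ) (x : Fin n → ℝ) : ℝ :=
  assocOp g (fun y => Sfield g gbar t y * (g y)⁻¹) f x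

/-- The Beltrami-Laplace operator of `g`, associated to `A = g⁻¹`. -/
def LaplaceOp {n : ℕ} (g : (Fin n → ℝ) → Matrix (Fin n) (Fin n) ℝ)
    (f : (Fin n → ℝ) → ℝ) (x : Fin n → ℝ) : ℝ :=
  assocOp g (fun y => (g y)⁻¹) f x

/-- `K` is a Killing tensor for `g` on `U`: the associated quadratic function is constant
along every `g`-geodesic. -/
def IsKillingTensorOn {n : ℕ} (U : Set (Fin n → ℝ))
    (g K : (Fin n → ℝ) → Matrix (Fin n) (Fin n) ℝ) : Prop :=
  ∀ (γ : ℝ → (Fin n → ℝ)) (I : Set ℝ), IsGeodesicOn U g γ I →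
    ∀ τ₁ ∈ I, ∀ τ₂ ∈ I,
      (∑ i, ∑ j, deriv (fun s => γ s i) τ₁ * K (γ τ₁) i j * deriv (fun s => γ s j) τ₁) =
      (∑ i, ∑ j, deriv (fun s => γ s i) τ₂ * K (γ τ₂) i j * deriv (fun s => γ s j) τ₂)

/-- The covariant derivative `∇_k T_{ij}` of a (0,2)-tensor field `T`. -/
def covDeriv2 {n : ℕ} (g T : (Fin n → ℝ) → Matrix (Fin n) (Fin n) ℝ)
    (k i j : Fin n) (x : Fin n → ℝ) : ℝ :=
  pd k (fun y => T y i j) x - (∑ s, Gamma g s k i x * T x s j)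
    - ∑ s, Gamma g s k j x * T x i s

/-- The Ricci curvature tensor `R_{ij}` of `g`. -/
def Ricci {n : ℕ} (g : (Fin n → ℝ) → Matrix (Fin n) (Fin n) ℝ)
    (i j : Fin n) (x : Fin n → ℝ) : ℝ :=
  (∑ ℓ, pd ℓ (fun y => Gamma g ℓ i j y) x) - (∑ ℓ, pd i (fun y => Gamma g ℓ ℓ j y) x)
    + ∑ ℓ, ∑ s, (Gamma g ℓ ℓ s x * Gamma g s i j x - Gamma g ℓ i s x * Gamma g s ℓ j x)

/-- A function vanishes up to order `k` at `p`: it and all its partial derivatives of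
order `≤ k` vanish at `p`. -/
def VanishUpTo {n : ℕ} (k : ℕ) (f : (Fin n → ℝ) → ℝ) (p : Fin n → ℝ) : Prop :=
  ∀ l : List (Fin n), l.length ≤ k → iterPD l f p = 0


/-- The plain (flat) second order operator `Â f = ∑ᵢⱼ ∂ᵢ(Aⁱʲ ∂ⱼ f)` associated to a
matrix field `A`. -/
def opPlain {n : ℕ} (A : (Fin n → ℝ) → Matrix (Fin n) (Fin n) ℝ)
    (f : (Fin n → ℝ) → ℝ) (x : Fin n → ℝ) : ℝ :=
  ∑ i, ∑ j, pd i (fun y => A y i j * pd j f y) x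

end

/-!
Lowering the index, `W = g V` is a covector field whose pairing `⟨γ', W(γ)⟩` with the velocity
is constant along every geodesic. Geodesics exist through every point in every direction, so
differentiating this pairing and polarising gives the Killing equation
`∂_a W_b + ∂_b W_a = (Γ^s_{ab} + Γ^s_{ba}) W_s`. Combining three derivatives of it expresses every
second derivative `∂_k ∂_a W_b` through `W` and `∂W`: the jet `(W, ∂W)` solves a closed linear
first order system with continuous coefficients. By Grönwall's inequality along segments the set
where the jet vanishes is open; it is also relatively closed and contains `p`, so it is all of
`U`, and `V = g⁻¹ W = 0`.
-/

open Filter Set Topology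

theorem ContDiffOn.differentiableAt_of_isOpen {E F : Type*} [NormedAddCommGroup E]
    [NormedSpace ℝ E] [NormedAddCommGroup F] [NormedSpace ℝ F] {U : Set E} {f : E → F}
    (hf : ContDiffOn ℝ (⊤ : ℕ∞) f U) (hU : IsOpen U) {x : E} (hx : x ∈ U) :
    DifferentiableAt ℝ f x :=
  (hf.differentiableOn (by simp)).differentiableAt (hU.mem_nhds hx)

section Partials

variable {n : ℕ}

theorem fderiv_apply_eq_sum_pd (f : (Fin n → ℝ) → ℝ) (x w : Fin n → ℝ) :
    fderiv ℝ f x w = ∑ k, w k * pd k f x := by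
  conv_lhs => rw [show w = ∑ k, w k • Pi.single k (1 : ℝ) by ext; simp [Pi.single_apply]]
  simp [pd]

theorem hasDerivAt_comp_eq_sum_pd {f : (Fin n → ℝ) → ℝ} {c : ℝ → Fin n → ℝ}
    {c' : Fin n → ℝ} {t : ℝ} (hf : DifferentiableAt ℝ f (c t)) (hc : HasDerivAt c c' t) :
    HasDerivAt (fun s => f (c s)) (∑ k, c' k * pd k f (c t)) t := by
  have h := hf.hasFDerivAt.comp_hasDerivAt t hc
  rwa [fderiv_apply_eq_sum_pd] at h

theorem Filter.EventuallyEq.pd_eq {f h : (Fin n → ℝ) → ℝ} {x : Fin n → ℝ}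
    (hfh : f =ᶠ[𝓝 x] h) (i : Fin n) : pd i f x = pd i h x := by
  simp only [pd, hfh.fderiv_eq]

theorem pd_add {f h : (Fin n → ℝ) → ℝ} {x : Fin n → ℝ} (hf : DifferentiableAt ℝ f x)
    (hh : DifferentiableAt ℝ h x) (i : Fin n) :
    pd i (fun y => f y + h y) x = pd i f x + pd i h x := by
  simp [pd, fderiv_fun_add hf hh]

theorem pd_mul {f h : (Fin n → ℝ) → ℝ} {x : Fin n → ℝ} (hf : DifferentiableAt ℝ f x)
    (hh : DifferentiableAt ℝ h x) (i : Fin n) :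
    pd i (fun y => f y * h y) x = f x * pd i h x + h x * pd i f x := by
  simp [pd, fderiv_fun_mul hf hh]

theorem pd_sum {ι : Type*} {s : Finset ι} {f : ι → (Fin n → ℝ) → ℝ} {x : Fin n → ℝ}
    (hf : ∀ j ∈ s, DifferentiableAt ℝ (f j) x) (i : Fin n) :
    pd i (fun y => ∑ j ∈ s, f j y) x = ∑ j ∈ s, pd i (f j) x := by
  simp [pd, fderiv_fun_sum hf]

theorem pd_comm {f : (Fin n → ℝ) → ℝ} {x : Fin n → ℝ} (hf : ContDiffAt ℝ 2 f x) (k a : Fin n) :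
    pd k (pd a f) x = pd a (pd k f) x := by
  have hdiff : DifferentiableAt ℝ (fderiv ℝ f) x :=
    (hf.fderiv_right (m := 1) le_rfl).differentiableAt one_ne_zero
  have hsecond : ∀ v w : Fin n → ℝ,
      fderiv ℝ (fun y => fderiv ℝ f y w) x v = fderiv ℝ (fderiv ℝ f) x v w := fun v w => by
    rw [fderiv_clm_apply hdiff (differentiableAt_const w)]
    simp
  unfold pd
  rw [hsecond, hsecond]
  exact hf.isSymmSndFDerivAt (by simp) _ _

theorem ContDiffOn.pd {U : Set (Fin n → ℝ)} {f : (Fin n → ℝ) → ℝ}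
    (hf : ContDiffOn ℝ (⊤ : ℕ∞) f U) (hU : IsOpen U) (i : Fin n) :
    ContDiffOn ℝ (⊤ : ℕ∞) (pd i f) U :=
  (hf.fderiv_of_isOpen hU (m := (⊤ : ℕ∞)) (by simp)).clm_apply contDiffOn_const

end Partials

section LinearFirstOrderSystem

variable {n : ℕ} {ι : Type*} [Fintype ι]

theorem Convex.eqOn_zero_of_abs_pd_le {s : Set (Fin n → ℝ)} {J : (Fin n → ℝ) → ι → ℝ}
    {K : ℝ} (hs : Convex ℝ s) (hso : IsOpen s) (hJ : ∀ i, DifferentiableOn ℝ (fun y => J y i) s)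
    (hK : 0 ≤ K) (hbound : ∀ y ∈ s, ∀ m i, |pd m (fun y => J y i) y| ≤ K * ‖J y‖)
    {z : Fin n → ℝ} (hz : z ∈ s) (hJz : J z = 0) : EqOn J 0 s := by
  intro x hx
  set d := x - z
  have hc : ∀ t, HasDerivAt (fun t : ℝ => z + t • d) d t := fun t => by
    simpa using ((hasDerivAt_id t).smul_const d).const_add z
  have hcs : ∀ t ∈ Icc (0 : ℝ) 1, z + t • d ∈ s := fun t ht => hs.add_smul_sub_mem hz hx ht
  have hderiv : ∀ t ∈ Icc (0 : ℝ) 1, HasDerivAt (fun t => J (z + t • d))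
      (fun i => ∑ m, d m * pd m (fun y => J y i) (z + t • d)) t := fun t ht =>
    hasDerivAt_pi.2 fun i => hasDerivAt_comp_eq_sum_pd
      ((hJ i).differentiableAt (hso.mem_nhds (hcs t ht))) (hc t)
  have hvanish := eq_zero_of_abs_deriv_le_mul_abs_self_of_eq_zero_right
    (K := (∑ m, |d m|) * K)
    (fun t ht => (hderiv t ht).continuousAt.continuousWithinAt)
    (fun t ht => (hderiv t (Ico_subset_Icc_self ht)).hasDerivWithinAt)
    (by simpa using hJz) (fun t ht => by
      have hy := hcs t (Ico_subset_Icc_self ht)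
      refine (pi_norm_le_iff_of_nonneg (by positivity)).2 fun i => ?_
      calc ‖∑ m, d m * pd m (fun y => J y i) (z + t • d)‖
          ≤ ∑ m, |d m| * (K * ‖J (z + t • d)‖) := by
            refine (norm_sum_le _ _).trans (Finset.sum_le_sum fun m _ => ?_)
            rw [norm_mul, Real.norm_eq_abs, Real.norm_eq_abs]
            exact mul_le_mul_of_nonneg_left (hbound _ hy m i) (abs_nonneg _)
        _ = (∑ m, |d m|) * K * ‖J (z + t • d)‖ := by simp only [Finset.sum_mul, mul_assoc])
    1 (by simp)
  simpa [d] using hvanish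

theorem IsPreconnected.eqOn_zero_of_abs_pd_le {U : Set (Fin n → ℝ)} {J : (Fin n → ℝ) → ι → ℝ}
    {C : Fin n → ι → (Fin n → ℝ) → ℝ} (hUc : IsPreconnected U) (hUo : IsOpen U)
    (hJ : ∀ i, DifferentiableOn ℝ (fun y => J y i) U) (hC : ∀ m i, ContinuousOn (C m i) U)
    (hbound : ∀ y ∈ U, ∀ m i, |pd m (fun y => J y i) y| ≤ C m i y * ‖J y‖)
    {p : Fin n → ℝ} (hp : p ∈ U) (hJp : J p = 0) : EqOn J 0 U := by
  set Z := {x | x ∈ U ∧ J x = 0}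
  have hZo : IsOpen Z := by
    refine Metric.isOpen_iff.2 fun z ⟨hzU, hJz⟩ => ?_
    obtain ⟨K, hK⟩ := Finite.exists_le fun mi : Fin n × ι => C mi.1 mi.2 z + 1
    have hnear : ∀ᶠ y in 𝓝 z, y ∈ U ∧ ∀ m i, C m i y ≤ C m i z + 1 :=
      (hUo.eventually_mem hzU).and <| eventually_all.2 fun m => eventually_all.2 fun i =>
        ((hC m i).continuousAt (hUo.mem_nhds hzU)).eventually
          (eventually_le_nhds (lt_add_one _))
    obtain ⟨r, hr, hball⟩ := Metric.eventually_nhds_iff_ball.1 hnear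
    have hzero := (convex_ball z r).eqOn_zero_of_abs_pd_le Metric.isOpen_ball
      (fun i => (hJ i).mono fun y hy => (hball y hy).1) (le_max_right K 0)
      (fun y hy m i => (hbound y (hball y hy).1 m i).trans <|
        mul_le_mul_of_nonneg_right
          (((hball y hy).2 m i).trans ((hK (m, i)).trans (le_max_left _ _))) (norm_nonneg _))
      (Metric.mem_ball_self hr) hJz
    exact ⟨r, hr, fun y hy => ⟨(hball y hy).1, hzero hy⟩⟩
  have hZclosed : closure Z ∩ U ⊆ Z := fun x ⟨hxZ, hxU⟩ => by
    have hcont : ContinuousWithinAt J Z x :=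
      (continuousOn_pi.2 fun i => (hJ i).continuousOn).continuousAt (hUo.mem_nhds hxU)
        |>.continuousWithinAt
    have hJx : J x ∈ closure {0} :=
      closure_mono (by rintro _ ⟨y, hy, rfl⟩; exact hy.2) (hcont.mem_closure_image hxZ)
    exact ⟨hxU, by simpa using hJx⟩
  exact fun x hx => (hUc.subset_of_closure_inter_subset hZo ⟨p, hp, hp, hJp⟩ hZclosed hx).2

end LinearFirstOrderSystem

section MetricSmoothness

variable {E : Type*} [NormedAddCommGroup E] [NormedSpace ℝ E] {ι : Type*} [Fintype ι]
  [DecidableEq ι] {k : WithTop ℕ∞} {s : Set E} {M : E → Matrix ι ι ℝ}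

theorem contDiffOn_det (hM : ∀ i j, ContDiffOn ℝ k (fun x => M x i j) s) :
    ContDiffOn ℝ k (fun x => (M x).det) s := by
  simp only [Matrix.det_apply']
  exact ContDiffOn.sum fun σ _ =>
    contDiffOn_const.mul (contDiffOn_prod fun i _ => hM (σ i) i)

theorem contDiffOn_inv_apply (hM : ∀ i j, ContDiffOn ℝ k (fun x => M x i j) s)
    (hdet : ∀ x ∈ s, IsUnit (M x).det) (i j : ι) :
    ContDiffOn ℝ k (fun x => (M x)⁻¹ i j) s := by
  have hadj : ContDiffOn ℝ k (fun x => (M x).adjugate i j) s := by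
    simp only [Matrix.adjugate_apply]
    refine contDiffOn_det fun a b => ?_
    by_cases hab : a = j
    · simp [hab, contDiffOn_const]
    · simpa [Matrix.updateRow_ne hab] using hM a b
  refine (((contDiffOn_det hM).inv fun x hx => (hdet x hx).ne_zero).mul hadj).congr
    fun x _ => ?_
  simp [Matrix.inv_def, Ring.inverse_eq_inv']

end MetricSmoothness


theorem contDiffOn_of_hasDerivAt_comp {E : Type*} [NormedAddCommGroup E] [NormedSpace ℝ E]
    {F : E → E} {s : Set E} {y : ℝ → E} {I : Set ℝ} (hF : ContDiffOn ℝ (⊤ : ℕ∞) F s)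
    (hI : IsOpen I) (hy : ∀ t ∈ I, HasDerivAt y (F (y t)) t) (hmem : ∀ t ∈ I, y t ∈ s) :
    ContDiffOn ℝ (⊤ : ℕ∞) y I := by
  have hdiff : DifferentiableOn ℝ y I := fun t ht =>
    (hy t ht).differentiableAt.differentiableWithinAt
  have hfinite : ∀ m : ℕ, ContDiffOn ℝ m y I := by
    intro m
    induction m with
    | zero => simpa [contDiffOn_zero] using hdiff.continuousOn
    | succ m ih =>
      rw [Nat.cast_succ, contDiffOn_succ_iff_deriv_of_isOpen hI]
      exact ⟨hdiff, by simp, ((hF.of_le (by exact_mod_cast le_top)).comp ih hmem).congr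
        fun t ht => (hy t ht).deriv⟩
  exact_mod_cast contDiffOn_infty.2 hfinite

section Geodesics

variable {n : ℕ} {U : Set (Fin n → ℝ)} {g : (Fin n → ℝ) → Matrix (Fin n) (Fin n) ℝ}

theorem IsMetricOn.contDiffOn_Gamma (hg : IsMetricOn U g) (hU : IsOpen U) (k i j : Fin n) :
    ContDiffOn ℝ (⊤ : ℕ∞) (Gamma g k i j) U :=
  contDiffOn_const.mul <| ContDiffOn.sum fun ℓ _ =>
    (contDiffOn_inv_apply hg.smooth hg.nondeg k ℓ).mul <|
      (((hg.smooth ℓ j).pd hU i).add ((hg.smooth ℓ i).pd hU j)).sub ((hg.smooth i j).pd hU ℓ)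

noncomputable def geodesicSpray (g : (Fin n → ℝ) → Matrix (Fin n) (Fin n) ℝ)
    (y : (Fin n → ℝ) × (Fin n → ℝ)) : (Fin n → ℝ) × (Fin n → ℝ) :=
  (y.2, fun k => -∑ i, ∑ j, Gamma g k i j y.1 * y.2 i * y.2 j)

theorem contDiffOn_geodesicSpray (hΓ : ∀ k i j, ContDiffOn ℝ (⊤ : ℕ∞) (Gamma g k i j) U) :
    ContDiffOn ℝ (⊤ : ℕ∞) (geodesicSpray g) (U ×ˢ univ) := by
  have hv : ∀ m : Fin n, ContDiff ℝ (⊤ : ℕ∞) fun y : (Fin n → ℝ) × (Fin n → ℝ) => y.2 m :=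
    fun m => (contDiff_apply ℝ ℝ m).comp contDiff_snd
  refine contDiff_snd.contDiffOn.prodMk <| contDiffOn_pi.2 fun k => ContDiffOn.neg <|
    ContDiffOn.sum fun i _ => ContDiffOn.sum fun j _ => ?_
  exact (((hΓ k i j).comp contDiff_fst.contDiffOn fun y hy => hy.1).mul
    (hv i).contDiffOn).mul (hv j).contDiffOn

theorem isGeodesicOn_of_hasDerivAt_geodesicSpray
    (hΓ : ∀ k i j, ContDiffOn ℝ (⊤ : ℕ∞) (Gamma g k i j) U)
    {y : ℝ → (Fin n → ℝ) × (Fin n → ℝ)} {I : Set ℝ} (hI : IsOpenInterval I)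
    (hy : ∀ t ∈ I, HasDerivAt y (geodesicSpray g (y t)) t) (hmem : ∀ t ∈ I, (y t).1 ∈ U) :
    IsGeodesicOn U g (fun t => (y t).1) I := by
  have hpos : ∀ t ∈ I, ∀ k, HasDerivAt (fun s => (y s).1 k) ((y t).2 k) t := fun t ht =>
    hasDerivAt_pi.1 (by simpa [Function.comp_def, geodesicSpray] using
      hasFDerivAt_fst.comp_hasDerivAt t (hy t ht))
  have hvel : ∀ t ∈ I, ∀ k, HasDerivAt (fun s => (y s).2 k)
      (-∑ i, ∑ j, Gamma g k i j (y t).1 * (y t).2 i * (y t).2 j) t := fun t ht =>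
    hasDerivAt_pi.1 (by simpa [Function.comp_def, geodesicSpray] using
      hasFDerivAt_snd.comp_hasDerivAt t (hy t ht))
  have hysmooth : ContDiffOn ℝ (⊤ : ℕ∞) y I :=
    contDiffOn_of_hasDerivAt_comp (contDiffOn_geodesicSpray hΓ) hI.1 hy
      fun t ht => ⟨hmem t ht, trivial⟩
  refine ⟨hI, fun k => ((contDiff_apply ℝ ℝ k).comp contDiff_fst).comp_contDiffOn hysmooth,
    hmem, fun t ht k => ?_⟩
  have hderiv : (deriv fun s => (y s).1 k) =ᶠ[𝓝 t] fun s => (y s).2 k :=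
    Filter.eventually_of_mem (hI.1.mem_nhds ht) fun s hs => (hpos s hs k).deriv
  simp only [hderiv.deriv_eq, (hvel t ht k).deriv, fun i => (hpos t ht i).deriv,
    neg_add_cancel]

theorem exists_isGeodesicOn (hU : IsOpen U)
    (hΓ : ∀ k i j, ContDiffOn ℝ (⊤ : ℕ∞) (Gamma g k i j) U) {q : Fin n → ℝ} (hq : q ∈ U)
    (v : Fin n → ℝ) : ∃ (γ : ℝ → Fin n → ℝ) (I : Set ℝ), 0 ∈ I ∧ IsGeodesicOn U g γ I ∧
      γ 0 = q ∧ ∀ k, deriv (fun s => γ s k) 0 = v k := by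
  have hqv : (q, v) ∈ U ×ˢ (univ : Set (Fin n → ℝ)) := ⟨hq, trivial⟩
  have hopen : IsOpen (U ×ˢ (univ : Set (Fin n → ℝ))) := hU.prod isOpen_univ
  have hC1 : ContDiffAt ℝ 1 (geodesicSpray g) (q, v) :=
    ((contDiffOn_geodesicSpray hΓ).contDiffAt (hopen.mem_nhds hqv)).of_le
      (by exact_mod_cast le_top)
  obtain ⟨y, hy0, ε₀, hε₀, hy⟩ :=
    hC1.exists_forall_mem_closedBall_exists_eq_forall_mem_Ioo_hasDerivAt₀ 0
  have h0 : (0 : ℝ) ∈ Ioo (0 - ε₀) (0 + ε₀) := by simp [hε₀]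
  have hnear : ∀ᶠ t in 𝓝 (0 : ℝ), y t ∈ U ×ˢ univ ∧ t ∈ Ioo (0 - ε₀) (0 + ε₀) :=
    ((hy 0 h0).continuousAt.eventually_mem (hopen.mem_nhds (hy0 ▸ hqv))).and
      (isOpen_Ioo.eventually_mem h0)
  obtain ⟨ε, hε, hball⟩ := Metric.eventually_nhds_iff_ball.1 hnear
  have hI : IsOpenInterval (Metric.ball (0 : ℝ) ε) :=
    ⟨Metric.isOpen_ball, by rw [Real.ball_eq_Ioo]; exact ordConnected_Ioo⟩
  have hpos0 : ∀ k, HasDerivAt (fun s => (y s).1 k) (v k) 0 := fun k => by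
    simpa [hy0, geodesicSpray] using hasDerivAt_pi.1 (hasFDerivAt_fst.comp_hasDerivAt 0 (hy 0 h0)) k
  refine ⟨fun t => (y t).1, Metric.ball 0 ε, Metric.mem_ball_self hε,
    isGeodesicOn_of_hasDerivAt_geodesicSpray hΓ hI (fun t ht => hy t (hball t ht).2)
      fun t ht => (hball t ht).1.1, by simp [hy0], fun k => (hpos0 k).deriv⟩

end Geodesics

theorem Matrix.apply_add_apply_swap_eq_zero {R ι : Type*} [CommRing R] [Fintype ι]
    [DecidableEq ι] {C : Matrix ι ι R} (h : ∀ v : ι → R, ∑ i, ∑ j, v i * C i j * v j = 0)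
    (a b : ι) : C a b + C b a = 0 := by
  have hAlt : (Matrix.toBilin' C).IsAlt := fun v => by rw [Matrix.toBilin'_apply]; exact h v
  rw [add_comm]
  simpa [eq_neg_iff_add_eq_zero] using (hAlt.neg_eq (Pi.single a 1) (Pi.single b 1)).symm

theorem sum_mul_sub_sum_mul_eq {n : ℕ} (v w : Fin n → ℝ) (P : Fin n → Fin n → ℝ)
    (Γ : Fin n → Fin n → Fin n → ℝ) :
    ∑ a, ∑ b, v a * (P b a - ∑ s, Γ s a b * w s) * v b =
      ∑ i, ((-∑ a, ∑ b, Γ i a b * v a * v b) * w i + v i * ∑ k, v k * P k i) := by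
  have hΓ : ∑ a, ∑ b, ∑ s, v a * (Γ s a b * w s) * v b =
      ∑ s, ∑ a, ∑ b, Γ s a b * v a * v b * w s := by
    rw [Finset.sum_comm_cycle]
    exact Finset.sum_congr rfl fun _ _ => Finset.sum_congr rfl fun _ _ =>
      Finset.sum_congr rfl fun _ _ => by ring
  simp only [mul_sub, sub_mul, Finset.sum_sub_distrib, Finset.sum_add_distrib, Finset.mul_sum,
    Finset.sum_mul, Finset.sum_neg_distrib, neg_mul, hΓ]
  rw [sub_eq_neg_add]
  exact congrArg _ (Finset.sum_congr rfl fun _ _ => Finset.sum_congr rfl fun _ _ => by ring)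

section GeodesicDerivatives

variable {n : ℕ} {U : Set (Fin n → ℝ)} {g : (Fin n → ℝ) → Matrix (Fin n) (Fin n) ℝ}
  {γ : ℝ → Fin n → ℝ} {I : Set ℝ} {t : ℝ}

theorem IsGeodesicOn.hasDerivAt (hγ : IsGeodesicOn U g γ I) (ht : t ∈ I) :
    HasDerivAt γ (fun k => deriv (fun s => γ s k) t) t :=
  hasDerivAt_pi.2 fun k =>
    ((hγ.smooth k).differentiableAt_of_isOpen hγ.interval.1 ht).hasDerivAt

theorem IsGeodesicOn.hasDerivAt_deriv (hγ : IsGeodesicOn U g γ I) (ht : t ∈ I) (k : Fin n) :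
    HasDerivAt (deriv fun s => γ s k) (deriv (deriv fun s => γ s k) t) t :=
  (((hγ.smooth k).deriv_of_isOpen hγ.interval.1 (m := (⊤ : ℕ∞)) (by simp))
    |>.differentiableAt_of_isOpen hγ.interval.1 ht).hasDerivAt

-- The derivative is `(∇W)(γ', γ')`.
theorem IsGeodesicOn.hasDerivAt_sum_deriv_mul (hγ : IsGeodesicOn U g γ I) (ht : t ∈ I)
    {W : (Fin n → ℝ) → Fin n → ℝ} (hW : ∀ i, DifferentiableAt ℝ (fun y => W y i) (γ t)) :
    HasDerivAt (fun τ => ∑ i, deriv (fun s => γ s i) τ * W (γ τ) i)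
      (∑ a, ∑ b, deriv (fun s => γ s a) t *
        (pd b (fun y => W y a) (γ t) - ∑ s, Gamma g s a b (γ t) * W (γ t) s) *
          deriv (fun s => γ s b) t) t := by
  have hacc : ∀ s, deriv (deriv fun τ => γ τ s) t = -∑ a, ∑ b, Gamma g s a b (γ t) *
      deriv (fun τ => γ τ a) t * deriv (fun τ => γ τ b) t := fun s =>
    eq_neg_of_add_eq_zero_left (hγ.eqn t ht s)
  refine (HasDerivAt.fun_sum fun i _ => (hγ.hasDerivAt_deriv ht i).fun_mul
    (hasDerivAt_comp_eq_sum_pd (hW i) (hγ.hasDerivAt ht))).congr_deriv ?_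
  simp only [hacc]
  exact (sum_mul_sub_sum_mul_eq _ _ _ _).symm

end GeodesicDerivatives

section Killing

variable {n : ℕ} {U : Set (Fin n → ℝ)} {g : (Fin n → ℝ) → Matrix (Fin n) (Fin n) ℝ}
  {W : (Fin n → ℝ) → Fin n → ℝ}

-- `g V` is a Killing covector field exactly when `V` is a Killing vector field.
def IsKillingCovectorOn (U : Set (Fin n → ℝ)) (g : (Fin n → ℝ) → Matrix (Fin n) (Fin n) ℝ)
    (W : (Fin n → ℝ) → Fin n → ℝ) : Prop :=
  ∀ (γ : ℝ → (Fin n → ℝ)) (I : Set ℝ), IsGeodesicOn U g γ I → ∀ τ₁ ∈ I, ∀ τ₂ ∈ I,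
    ∑ i, deriv (fun s => γ s i) τ₁ * W (γ τ₁) i = ∑ i, deriv (fun s => γ s i) τ₂ * W (γ τ₂) i

theorem IsKillingCovectorOn.sum_mul_sub_sum_mul_eq_zero (hK : IsKillingCovectorOn U g W)
    (hU : IsOpen U) (hΓ : ∀ k i j, ContDiffOn ℝ (⊤ : ℕ∞) (Gamma g k i j) U) {q : Fin n → ℝ}
    (hq : q ∈ U) (hW : ∀ i, DifferentiableAt ℝ (fun y => W y i) q) (v : Fin n → ℝ) :
    ∑ a, ∑ b, v a * (pd b (fun y => W y a) q - ∑ s, Gamma g s a b q * W q s) * v b = 0 := by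
  obtain ⟨γ, I, h0, hγ, hγ0, hγ'0⟩ := exists_isGeodesicOn hU hΓ hq v
  have hconst : (fun τ => ∑ i, deriv (fun s => γ s i) τ * W (γ τ) i) =ᶠ[𝓝 0]
      fun _ => ∑ i, deriv (fun s => γ s i) 0 * W (γ 0) i :=
    Filter.eventually_of_mem (hγ.interval.1.mem_nhds h0) fun τ hτ => hK γ I hγ τ hτ 0 h0
  have hderiv := (hγ.hasDerivAt_sum_deriv_mul h0 (hγ0 ▸ hW)).unique
    ((hasDerivAt_const 0 _).congr_of_eventuallyEq hconst)
  simpa only [hγ0, hγ'0] using hderiv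

noncomputable def gammaContract (g : (Fin n → ℝ) → Matrix (Fin n) (Fin n) ℝ)
    (W : (Fin n → ℝ) → Fin n → ℝ) (a b : Fin n) (x : Fin n → ℝ) : ℝ :=
  ∑ s, (Gamma g s a b x + Gamma g s b a x) * W x s

theorem IsKillingCovectorOn.pd_add_pd_eq (hK : IsKillingCovectorOn U g W) (hU : IsOpen U)
    (hΓ : ∀ k i j, ContDiffOn ℝ (⊤ : ℕ∞) (Gamma g k i j) U) {q : Fin n → ℝ} (hq : q ∈ U)
    (hW : ∀ i, DifferentiableAt ℝ (fun y => W y i) q) (a b : Fin n) :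
    pd a (fun y => W y b) q + pd b (fun y => W y a) q = gammaContract g W a b q := by
  have h := Matrix.apply_add_apply_swap_eq_zero
    (C := Matrix.of fun a b => pd b (fun y => W y a) q - ∑ s, Gamma g s a b q * W q s)
    (by simpa using hK.sum_mul_sub_sum_mul_eq_zero hU hΓ hq hW) a b
  simp only [Matrix.of_apply] at h
  simp only [gammaContract, add_mul, Finset.sum_add_distrib]
  linarith

theorem IsKillingCovectorOn.two_mul_pd_pd_eq (hK : IsKillingCovectorOn U g W) (hU : IsOpen U)
    (hΓ : ∀ k i j, ContDiffOn ℝ (⊤ : ℕ∞) (Gamma g k i j) U)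
    (hW : ∀ i, ContDiffOn ℝ (⊤ : ℕ∞) (fun y => W y i) U) {y : Fin n → ℝ} (hy : y ∈ U)
    (k a b : Fin n) :
    2 * pd k (pd a fun x => W x b) y = pd k (gammaContract g W a b) y +
      pd a (gammaContract g W k b) y - pd b (gammaContract g W k a) y := by
  have hsym : ∀ c d e, pd c (gammaContract g W d e) y =
      pd c (pd d fun x => W x e) y + pd c (pd e fun x => W x d) y := fun c d e => by
    rw [← pd_add (((hW e).pd hU d).differentiableAt_of_isOpen hU hy)
      (((hW d).pd hU e).differentiableAt_of_isOpen hU hy)]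
    have hev : gammaContract g W d e =ᶠ[𝓝 y]
        fun x => pd d (fun x => W x e) x + pd e (fun x => W x d) x :=
      Filter.eventually_of_mem (hU.mem_nhds hy) fun x hx =>
        (hK.pd_add_pd_eq hU hΓ hx (fun i => (hW i).differentiableAt_of_isOpen hU hx) d e).symm
    exact hev.pd_eq c
  have hcomm : ∀ c d e, pd c (pd d fun x => W x e) y = pd d (pd c fun x => W x e) y :=
    fun c d e => pd_comm (((hW e).contDiffAt (hU.mem_nhds hy)).of_le
      (WithTop.coe_le_coe.2 le_top)) c d
  rw [hsym, hsym, hsym, hcomm a k b, hcomm b k a, hcomm b a k]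
  ring

end Killing

theorem abs_pd_sum_mul_le {n : ℕ} {ι : Type*} {t : Finset ι} {A w : ι → (Fin n → ℝ) → ℝ}
    {y : Fin n → ℝ} {M : ℝ} (hA : ∀ s ∈ t, DifferentiableAt ℝ (A s) y)
    (hw : ∀ s ∈ t, DifferentiableAt ℝ (w s) y) (hwM : ∀ s ∈ t, |w s y| ≤ M)
    (hdwM : ∀ s ∈ t, ∀ k, |pd k (w s) y| ≤ M) (k : Fin n) :
    |pd k (fun x => ∑ s ∈ t, A s x * w s x) y| ≤ (∑ s ∈ t, (|A s y| + |pd k (A s) y|)) * M := by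
  rw [pd_sum (fun s hs => (hA s hs).fun_mul (hw s hs)), Finset.sum_mul]
  refine (Finset.abs_sum_le_sum_abs _ _).trans (Finset.sum_le_sum fun s hs => ?_)
  rw [pd_mul (hA s hs) (hw s hs)]
  calc |A s y * pd k (w s) y + w s y * pd k (A s) y|
      ≤ |A s y| * M + M * |pd k (A s) y| := by
        refine (abs_add_le _ _).trans (add_le_add ?_ ?_) <;> rw [abs_mul]
        · exact mul_le_mul_of_nonneg_left (hdwM s hs k) (abs_nonneg _)
        · exact mul_le_mul_of_nonneg_right (hwM s hs) (abs_nonneg _)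
    _ = (|A s y| + |pd k (A s) y|) * M := by ring

section OneJet

variable {n : ℕ} {U : Set (Fin n → ℝ)} {W : (Fin n → ℝ) → Fin n → ℝ}

noncomputable def oneJet (W : (Fin n → ℝ) → Fin n → ℝ) (y : Fin n → ℝ) :
    Option (Fin n) × Fin n → ℝ
  | (none, i) => W y i
  | (some k, i) => pd k (fun x => W x i) y

theorem abs_le_norm_oneJet (y : Fin n → ℝ) (i : Fin n) : |W y i| ≤ ‖oneJet W y‖ := by
  simpa only [Real.norm_eq_abs, oneJet] using norm_le_pi_norm (oneJet W y) (none, i)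

theorem abs_pd_le_norm_oneJet (y : Fin n → ℝ) (k i : Fin n) :
    |pd k (fun x => W x i) y| ≤ ‖oneJet W y‖ := by
  simpa only [Real.norm_eq_abs, oneJet] using norm_le_pi_norm (oneJet W y) (some k, i)

theorem contDiffOn_oneJet (hU : IsOpen U) (hW : ∀ i, ContDiffOn ℝ (⊤ : ℕ∞) (fun x => W x i) U) :
    ∀ j, ContDiffOn ℝ (⊤ : ℕ∞) (fun x => oneJet W x j) U
  | (none, i) => hW i
  | (some k, i) => (hW i).pd hU k

end OneJet

section KillingJet

variable {n : ℕ} {U : Set (Fin n → ℝ)} {g : (Fin n → ℝ) → Matrix (Fin n) (Fin n) ℝ}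
  {W : (Fin n → ℝ) → Fin n → ℝ}

theorem exists_continuousOn_abs_pd_gammaContract_le (hU : IsOpen U)
    (hΓ : ∀ k i j, ContDiffOn ℝ (⊤ : ℕ∞) (Gamma g k i j) U)
    (hW : ∀ i, ContDiffOn ℝ (⊤ : ℕ∞) (fun x => W x i) U) (k a b : Fin n) :
    ∃ C : (Fin n → ℝ) → ℝ, ContinuousOn C U ∧
      ∀ y ∈ U, |pd k (gammaContract g W a b) y| ≤ C y * ‖oneJet W y‖ := by
  have hA : ∀ s, ContDiffOn ℝ (⊤ : ℕ∞) (fun x => Gamma g s a b x + Gamma g s b a x) U :=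
    fun s => (hΓ s a b).add (hΓ s b a)
  refine ⟨fun y => ∑ s, (|Gamma g s a b y + Gamma g s b a y| +
      |pd k (fun x => Gamma g s a b x + Gamma g s b a x) y|),
    continuousOn_finsetSum _ fun s _ =>
      (hA s).continuousOn.abs.add ((hA s).pd hU k).continuousOn.abs, fun y hy => ?_⟩
  exact abs_pd_sum_mul_le (fun s _ => (hA s).differentiableAt_of_isOpen hU hy)
    (fun s _ => (hW s).differentiableAt_of_isOpen hU hy)
    (fun s _ => abs_le_norm_oneJet y s) (fun s _ k => abs_pd_le_norm_oneJet y k s) k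

theorem IsKillingCovectorOn.exists_continuousOn_abs_pd_oneJet_le
    (hK : IsKillingCovectorOn U g W) (hU : IsOpen U)
    (hΓ : ∀ k i j, ContDiffOn ℝ (⊤ : ℕ∞) (Gamma g k i j) U)
    (hW : ∀ i, ContDiffOn ℝ (⊤ : ℕ∞) (fun x => W x i) U) (m : Fin n) :
    ∀ j, ∃ C : (Fin n → ℝ) → ℝ, ContinuousOn C U ∧
      ∀ y ∈ U, |pd m (fun x => oneJet W x j) y| ≤ C y * ‖oneJet W y‖
  | (none, i) => ⟨fun _ => 1, continuousOn_const, fun y _ => by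
      simpa only [one_mul, oneJet] using abs_pd_le_norm_oneJet y m i⟩
  | (some k, i) => by
    obtain ⟨C₁, hC₁, h₁⟩ := exists_continuousOn_abs_pd_gammaContract_le hU hΓ hW m k i
    obtain ⟨C₂, hC₂, h₂⟩ := exists_continuousOn_abs_pd_gammaContract_le hU hΓ hW k m i
    obtain ⟨C₃, hC₃, h₃⟩ := exists_continuousOn_abs_pd_gammaContract_le hU hΓ hW i m k
    refine ⟨fun y => (C₁ y + C₂ y + C₃ y) / 2, ((hC₁.add hC₂).add hC₃).div_const 2,
      fun y hy => ?_⟩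
    have h := hK.two_mul_pd_pd_eq hU hΓ hW hy m k i
    have b₁ := abs_le.1 (h₁ y hy)
    have b₂ := abs_le.1 (h₂ y hy)
    have b₃ := abs_le.1 (h₃ y hy)
    show |pd m (pd k fun x => W x i) y| ≤ _
    rw [abs_le]
    constructor <;> linarith

end KillingJet

theorem oneJet_mulVec_eq_zero {n : ℕ} {g : (Fin n → ℝ) → Matrix (Fin n) (Fin n) ℝ}
    {V : (Fin n → ℝ) → Fin n → ℝ} {p : Fin n → ℝ}
    (hg : ∀ i j, DifferentiableAt ℝ (fun x => g x i j) p)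
    (hV : ∀ i, DifferentiableAt ℝ (fun x => V x i) p) (hV0 : ∀ i, V p i = 0)
    (hV1 : ∀ k i, pd k (fun x => V x i) p = 0) :
    oneJet (fun x => g x *ᵥ V x) p = 0 := by
  funext j
  rcases j with ⟨_ | k, i⟩
  · simp [oneJet, Matrix.mulVec, dotProduct, hV0]
  · simp only [oneJet, Matrix.mulVec, dotProduct]
    rw [pd_sum fun j _ => (hg i j).fun_mul (hV j)]
    simp [pd_mul (hg i _) (hV _), hV0, hV1]

theorem Killing_vector_vanishing_to_order_one_is_zero_general {n : ℕ} (U : Set (Fin n → ℝ)) (hUo : IsOpen U) (hUc : IsConnected U)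
    (g : (Fin n → ℝ) → Matrix (Fin n) (Fin n) ℝ) (hg : IsMetricOn U g)
    (V : (Fin n → ℝ) → Fin n → ℝ)
    (hVs : ∀ i : Fin n, ContDiffOn ℝ (⊤ : ℕ∞) (fun x => V x i) U)
    (hKV : ∀ (γ : ℝ → (Fin n → ℝ)) (I : Set ℝ), IsGeodesicOn U g γ I →
      ∀ τ₁ ∈ I, ∀ τ₂ ∈ I,
        (∑ i, ∑ j, deriv (fun s => γ s i) τ₁ * g (γ τ₁) i j * V (γ τ₁) j) =
          ∑ i, ∑ j, deriv (fun s => γ s i) τ₂ * g (γ τ₂) i j * V (γ τ₂) j)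
    (p : Fin n → ℝ) (hp : p ∈ U)
    (hvan0 : ∀ i : Fin n, V p i = 0)
    (hvan1 : ∀ i j : Fin n, pd i (fun x => V x j) p = 0) :
    ∀ x ∈ U, V x = 0 := by
  set W := fun x => g x *ᵥ V x
  have hW : ∀ i, ContDiffOn ℝ (⊤ : ℕ∞) (fun x => W x i) U := fun i =>
    show ContDiffOn ℝ _ (fun x => ∑ j, g x i j * V x j) U from
      ContDiffOn.sum fun j _ => (hg.smooth i j).mul (hVs j)
  have hK : IsKillingCovectorOn U g W := fun γ I hγ τ₁ h₁ τ₂ h₂ => by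
    simpa only [W, Matrix.mulVec, dotProduct, Finset.mul_sum, mul_assoc] using
      hKV γ I hγ τ₁ h₁ τ₂ h₂
  have hΓ := hg.contDiffOn_Gamma hUo
  choose C hC hbound using hK.exists_continuousOn_abs_pd_oneJet_le hUo hΓ hW
  have hJ := hUc.isPreconnected.eqOn_zero_of_abs_pd_le hUo
    (fun j => (contDiffOn_oneJet hUo hW j).differentiableOn (by simp)) hC
    (fun y hy m j => hbound m j y hy) hp
    (oneJet_mulVec_eq_zero (fun i j => (hg.smooth i j).differentiableAt_of_isOpen hUo hp)
      (fun i => (hVs i).differentiableAt_of_isOpen hUo hp) hvan0 hvan1)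
  intro x hx
  refine Matrix.mulVec_injective_of_det_ne_zero (hg.nondeg x hx).ne_zero ?_
  rw [Matrix.mulVec_zero]
  exact funext fun i => congrFun (hJ hx) (none, i)

theorem Killing_vector_vanishing_to_order_one_is_zero {n : ℕ} (hn : 2 ≤ n) (U : Set (Fin n → ℝ)) (hUo : IsOpen U) (hUc : IsConnected U)
    (g : (Fin n → ℝ) → Matrix (Fin n) (Fin n) ℝ) (hg : IsMetricOn U g)
    (V : (Fin n → ℝ) → Fin n → ℝ)
    (hVs : ∀ i : Fin n, ContDiffOn ℝ (⊤ : ℕ∞) (fun x => V x i) U)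
    (hKV : ∀ (γ : ℝ → (Fin n → ℝ)) (I : Set ℝ), IsGeodesicOn U g γ I →
      ∀ τ₁ ∈ I, ∀ τ₂ ∈ I,
        (∑ i, ∑ j, deriv (fun s => γ s i) τ₁ * g (γ τ₁) i j * V (γ τ₁) j) =
          ∑ i, ∑ j, deriv (fun s => γ s i) τ₂ * g (γ τ₂) i j * V (γ τ₂) j)
    (p : Fin n → ℝ) (hp : p ∈ U)
    (hvan0 : ∀ i : Fin n, V p i = 0)
    (hvan1 : ∀ i j : Fin n, pd i (fun x => V x j) p = 0) :
    ∀ x ∈ U, V x = 0 :=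
  Killing_vector_vanishing_to_order_one_is_zero_general U hUo hUc g hg V hVs hKV p hp hvan0 hvan1
end

section
/- Let f : ℝ → ℝ be a smooth nowhere-vanishing function, let k ∈ ℕ, and let p, q ∈ ℝ with p ≠ q. Then there exists a smooth nowhere-vanishing function f' : ℝ → ℝ such that f' − f vanishes at p together with all its derivatives of order ≤ k (i.e., f' coincides with f at p up to order k), while all derivatives of f' of orders 1 through k vanish at q (i.e., f' is constant at q up to order k). -/
open Matrix

/-! Compose `f` with a smooth self-map `φ` of `ℝ` that is the identity near `p` and
constant near `q`, e.g. `φ x = p + χ x • (x - p)` for a bump function `χ` centred at `p`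
whose support misses `q`. Then `f ∘ φ` has no zeros because `f` has none, agrees with `f`
near `p`, and is constant near `q`. -/

open Filter Topology

theorem exists_contDiff_eventuallyEq_id_and_eventually_const
    {E : Type*} [NormedAddCommGroup E] [NormedSpace ℝ E] [HasContDiffBump E]
    {n : ℕ∞} {p q : E} (hpq : p ≠ q) :
    ∃ φ : E → E, ContDiff ℝ n φ ∧ φ =ᶠ[𝓝 p] id ∧ ∀ᶠ x in 𝓝 q, φ x = p := by
  have hd : 0 < dist p q := dist_pos.2 hpq
  let χ : ContDiffBump p := ⟨dist p q / 4, dist p q / 2, by linarith, by linarith⟩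
  have hχq : χ =ᶠ[𝓝 q] 0 := by
    refine notMem_tsupport_iff_eventuallyEq.1 ?_
    rw [χ.tsupport_eq, Metric.mem_closedBall, dist_comm]
    show ¬ dist p q ≤ dist p q / 2
    linarith
  refine ⟨fun x => p + χ x • (x - p), ?_, ?_, ?_⟩
  · exact contDiff_const.add (χ.contDiff.smul (contDiff_id.sub contDiff_const))
  · filter_upwards [χ.eventuallyEq_one] with x hx
    simp [hx]
  · filter_upwards [hχq] with x hx
    simp [hx]

theorem perturb_nowhere_vanishing_function (f : ℝ → ℝ)
    (hf : ContDiff ℝ (⊤ : ℕ∞) f) (hf0 : ∀ x, f x ≠ 0)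
    (k : ℕ) (p q : ℝ) (hpq : p ≠ q) :
    ∃ f' : ℝ → ℝ, ContDiff ℝ (⊤ : ℕ∞) f' ∧ (∀ x, f' x ≠ 0) ∧
      (∀ j ≤ k, iteratedDeriv j (fun x => f' x - f x) p = 0) ∧
      (∀ j, 1 ≤ j → j ≤ k → iteratedDeriv j f' q = 0) := by
  obtain ⟨φ, hφ, hφp, hφq⟩ := exists_contDiff_eventuallyEq_id_and_eventually_const hpq
  refine ⟨f ∘ φ, hf.comp hφ, fun x => hf0 (φ x), fun j _ => ?_, fun j hj _ => ?_⟩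
  · have hp : (fun x => (f ∘ φ) x - f x) =ᶠ[𝓝 p] fun _ => 0 := by
      filter_upwards [hφp] with x hx
      simp [hx]
    rw [hp.iteratedDeriv_eq, iteratedDeriv_fun_const_zero]
  · have hq : f ∘ φ =ᶠ[𝓝 q] fun _ => f p := by
      filter_upwards [hφq] with x hx
      simp [hx]
    rw [hq.iteratedDeriv_eq, iteratedDeriv_const, if_neg (by omega)]
end
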